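/- For Σ, Λ symmetric positive definite, the Bures-Wasserstein geodesic γ(t) = (1−t)²Σ + t²Λ + 2t(1−t)·sym(Σ^{1/2}(Σ^{1/2}ΛΣ^{1/2})^{1/2}Σ^{−1/2}) is symmetric positive definite for every t ∈ [0,1]. -/

import Mathlib

open Matrix

open Classical in
/-- The symmetric PSD square root of a PSD matrix (junk value `0` otherwise). -/
noncomputable def psdSqrt {n : ℕ} (A : Matrix (Fin n) (Fin n) ℝ) : Matrix (Fin n) (Fin n) ℝ :=
  if h : A.PosSemidef then
    (h.1.eigenvectorUnitary : Matrix (Fin n) (Fin n) ℝ) *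
      diagonal ((↑) ∘ (√·) ∘ h.1.eigenvalues) *
      (star h.1.eigenvectorUnitary : Matrix (Fin n) (Fin n) ℝ)
  else 0

/-- Symmetric part of a square matrix. -/
noncomputable def symPart {n : ℕ} (M : Matrix (Fin n) (Fin n) ℝ) : Matrix (Fin n) (Fin n) ℝ :=
  (1 / 2 : ℝ) • (M + Mᵀ)

/-!
Let `T` be the transport map `Σ^{-1/2} (Σ^{1/2} Λ Σ^{1/2})^{1/2} Σ^{-1/2}`. Then `T Σ T = Λ` and
`Σ T = Σ^{1/2} (Σ^{1/2} Λ Σ^{1/2})^{1/2} Σ^{-1/2}`, whose transpose is `T Σ`, so the geodesic is the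
congruence `γ(t) = R Σ R` with `R = (1 - t) I + t T`. As a convex combination of the positive
definite matrices `I` and `T`, `R` is positive definite, hence so is `γ(t)`.
-/

open AffineMap

theorem lineMap_one_mul_mul_lineMap_one {k R : Type*} [CommRing k] [Ring R] [Algebra k R]
    (A T : R) (t : k) :
    lineMap 1 T t * A * lineMap 1 T t =
      (1 - t) ^ 2 • A + t ^ 2 • (T * A * T) + (t * (1 - t)) • (A * T + T * A) := by
  simp only [lineMap_apply_module, add_mul, mul_add, smul_mul_assoc, mul_smul_comm, one_mul,
    mul_one, smul_add, smul_smul]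
  module

namespace Matrix

theorem PosDef.lineMap_one {ι : Type*} [DecidableEq ι] {T : Matrix ι ι ℝ} (hT : T.PosDef)
    {t : ℝ} (ht : t ∈ Set.Icc 0 1) :
    (lineMap 1 T t).PosDef := by
  rw [lineMap_apply_module]
  obtain ⟨ht0, ht1⟩ := ht
  rcases ht1.lt_or_eq with ht1 | rfl
  · exact (PosDef.one.smul (sub_pos.mpr ht1)).add_posSemidef (hT.posSemidef.smul ht0)
  · simpa using hT

theorem PosDef.mul_mul_same {ι : Type*} [Fintype ι] [DecidableEq ι] {A R : Matrix ι ι ℝ}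
    (hA : A.PosDef) (hR : R.PosDef) :
    (R * A * R).PosDef := by
  have := (IsUnit.posDef_star_right_conjugate_iff hR.isUnit).mpr hA
  rwa [star_eq_conjTranspose, hR.isHermitian.eq] at this

end Matrix

section psdSqrt

variable {n : ℕ} {A : Matrix (Fin n) (Fin n) ℝ}

theorem psdSqrt_eq_cfc (hA : A.PosSemidef) : psdSqrt A = cfc Real.sqrt A := by
  rw [psdSqrt, dif_pos hA, hA.1.cfc_eq, IsHermitian.cfc, Unitary.conjStarAlgAut_apply]
  rfl

theorem psdSqrt_mul_self (hA : A.PosSemidef) : psdSqrt A * psdSqrt A = A := by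
  rw [psdSqrt_eq_cfc hA, ← cfc_mul Real.sqrt Real.sqrt A]
  conv_rhs => rw [← cfc_id ℝ A hA.1.isSelfAdjoint]
  refine cfc_congr fun x hx => ?_
  obtain ⟨i, rfl⟩ := hA.1.spectrum_real_eq_range_eigenvalues ▸ hx
  exact Real.mul_self_sqrt (hA.eigenvalues_nonneg i)

theorem psdSqrt_transpose (A : Matrix (Fin n) (Fin n) ℝ) : (psdSqrt A)ᵀ = psdSqrt A := by
  suffices (psdSqrt A).IsHermitian from (isHermitian_iff_isSymm.mp this).eq
  rw [psdSqrt]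
  split_ifs
  · simpa [star_eq_conjTranspose] using
      isHermitian_mul_mul_conjTranspose _ (isHermitian_diagonal (_ : Fin n → ℝ))
  · exact isHermitian_zero

theorem Matrix.PosDef.psdSqrt (hA : A.PosDef) : (psdSqrt A).PosDef := by
  rw [_root_.psdSqrt, dif_pos hA.posSemidef]
  refine (IsUnit.posDef_star_right_conjugate_iff Unitary.isUnit_coe).mpr ?_
  exact posDef_diagonal_iff.mpr fun i => Real.sqrt_pos.mpr (hA.eigenvalues_pos i)

end psdSqrt

section transportMap

variable {n : ℕ} {A B : Matrix (Fin n) (Fin n) ℝ}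

/-- The optimal transport map from `N(0, A)` to `N(0, B)`. -/
noncomputable def transportMap (A B : Matrix (Fin n) (Fin n) ℝ) : Matrix (Fin n) (Fin n) ℝ :=
  (psdSqrt A)⁻¹ * psdSqrt (psdSqrt A * B * psdSqrt A) * (psdSqrt A)⁻¹

theorem Matrix.PosDef.transportMap (hA : A.PosDef) (hB : B.PosDef) :
    (transportMap A B).PosDef :=
  (hB.mul_mul_same hA.psdSqrt).psdSqrt.mul_mul_same hA.psdSqrt.inv

theorem symPart_mul_mul_inv {S M : Matrix (Fin n) (Fin n) ℝ} (hS : Sᵀ = S) (hM : Mᵀ = M) :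
    symPart (S * M * S⁻¹) = (1 / 2 : ℝ) • (S * M * S⁻¹ + S⁻¹ * M * S) := by
  rw [symPart, transpose_mul, transpose_mul, transpose_nonsing_inv, hS, hM,
    ← Matrix.mul_assoc S⁻¹]

section conjugation

variable {S : Matrix (Fin n) (Fin n) ℝ} (M : Matrix (Fin n) (Fin n) ℝ)

theorem mul_inv_mul_mul_inv_of_mul_self_eq (hS : IsUnit S.det) (hSA : S * S = A) :
    A * (S⁻¹ * M * S⁻¹) = S * M * S⁻¹ := by
  rw [← hSA]
  simp only [Matrix.mul_assoc, mul_nonsing_inv_cancel_left _ _ hS]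

theorem inv_mul_mul_inv_mul_of_mul_self_eq (hS : IsUnit S.det) (hSA : S * S = A) :
    S⁻¹ * M * S⁻¹ * A = S⁻¹ * M * S := by
  rw [← hSA, ← Matrix.mul_assoc, nonsing_inv_mul_cancel_right _ _ hS]

theorem inv_mul_mul_inv_conj_of_mul_self_eq (hS : IsUnit S.det) (hSA : S * S = A) :
    S⁻¹ * M * S⁻¹ * A * (S⁻¹ * M * S⁻¹) = S⁻¹ * (M * M) * S⁻¹ := by
  rw [inv_mul_mul_inv_mul_of_mul_self_eq M hS hSA]
  simp only [Matrix.mul_assoc, mul_nonsing_inv_cancel_left _ _ hS]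

end conjugation

theorem symPart_psdSqrt_mul_mul_inv (hA : A.PosDef) :
    symPart (psdSqrt A * psdSqrt (psdSqrt A * B * psdSqrt A) * (psdSqrt A)⁻¹) =
      (1 / 2 : ℝ) • (A * transportMap A B + transportMap A B * A) := by
  have hS : IsUnit (psdSqrt A).det := hA.psdSqrt.isUnit.map detMonoidHom
  have hSA := psdSqrt_mul_self hA.posSemidef
  rw [symPart_mul_mul_inv (psdSqrt_transpose A) (psdSqrt_transpose _), transportMap,
    mul_inv_mul_mul_inv_of_mul_self_eq _ hS hSA, inv_mul_mul_inv_mul_of_mul_self_eq _ hS hSA]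

theorem transportMap_mul_mul_transportMap (hA : A.PosDef) (hB : B.PosSemidef) :
    transportMap A B * A * transportMap A B = B := by
  set S := psdSqrt A
  have hS : IsUnit S.det := hA.psdSqrt.isUnit.map detMonoidHom
  have hSBS : (S * B * S).PosSemidef := by
    have := hB.mul_mul_conjTranspose_same S
    rwa [conjTranspose_eq_transpose_of_trivial, psdSqrt_transpose] at this
  rw [transportMap, inv_mul_mul_inv_conj_of_mul_self_eq _ hS (psdSqrt_mul_self hA.posSemidef),
    psdSqrt_mul_self hSBS]
  simp only [Matrix.mul_assoc, nonsing_inv_mul_cancel_left _ _ hS,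
    mul_nonsing_inv_cancel_right _ _ hS]

end transportMap

theorem buresWasserstein_geodesic_posdef (n : ℕ) (A B : Matrix (Fin n) (Fin n) ℝ)
    (hA : A.PosDef) (hB : B.PosDef) (t : ℝ) (ht : t ∈ Set.Icc (0 : ℝ) 1) :
    ((1 - t) ^ 2 • A + t ^ 2 • B + (2 * t * (1 - t)) • symPart
        (psdSqrt A * psdSqrt (psdSqrt A * B * psdSqrt A) * (psdSqrt A)⁻¹)).PosDef := by
  set T := transportMap A B
  have hγ : (1 - t) ^ 2 • A + t ^ 2 • B + (2 * t * (1 - t)) • symPart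
      (psdSqrt A * psdSqrt (psdSqrt A * B * psdSqrt A) * (psdSqrt A)⁻¹) =
      lineMap 1 T t * A * lineMap 1 T t := by
    rw [lineMap_one_mul_mul_lineMap_one, transportMap_mul_mul_transportMap hA hB.posSemidef,
      symPart_psdSqrt_mul_mul_inv hA, smul_smul]
    congr 2
    ring
  rw [hγ]
  exact hA.mul_mul_same ((hA.transportMap hB).lineMap_one ht)
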